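/- arXiv:2507.03465 — 2 statements merged into one kernel-verified Lean document; each statement's English description precedes it below -/
import Mathlib

section
/- Let Σ be a finite nonempty alphabet. For every nonempty Σ-labelled binary tree S, the asymptotic density of the set of trees containing S as a subtree equals 1; that is, lim_{n→∞} |{T ∈ ℬ^Σ_n : S ⪯ T}|/(C_n·|Σ|^n) = 1. -/
open Filter Topology

namespace Sparse

inductive BTree (α : Type*) where
  | nil : BTree α
  | node : α → BTree α → BTree α → BTree α

namespace BTree

variable {α : Type*}

/-- The number of nodes of a binary tree. -/
def size : BTree α → ℕ
  | nil => 0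
  | node _ l r => size l + size r + 1

/-- `Subtree S T` means `S = T`, or `T` is nonempty and `S` is a subtree of the left or
right subtree of the root of `T`. -/
inductive Subtree : BTree α → BTree α → Prop where
  | refl (T : BTree α) : Subtree T T
  | left {S l r : BTree α} {a : α} : Subtree S l → Subtree S (node a l r)
  | right {S l r : BTree α} {a : α} : Subtree S r → Subtree S (node a l r)

end BTree

variable {α : Type*}

/-- A run of a tree automaton with transition relation `Δ` on a binary tree: the empty tree is
assigned `none` (i.e. `⊥`), and a nonempty tree with root label `a` and run values `ql`, `qr` on
the two subtrees is assigned a state `q` with `(ql, qr, a, q) ∈ Δ`. -/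
inductive Run {Q : Type*} (Δ : Option Q → Option Q → α → Q → Prop) :
    BTree α → Option Q → Prop where
  | nil : Run Δ BTree.nil none
  | node {a : α} {l r : BTree α} {ql qr : Option Q} {q : Q} :
      Run Δ l ql → Run Δ r qr → Δ ql qr a q → Run Δ (BTree.node a l r) (some q)

/-- A tree automaton with transitions `Δ` and accepting states `F` accepts `T` if some run
assigns `T` a state in `F`. -/
def TAccepts {Q : Type*} (Δ : Option Q → Option Q → α → Q → Prop) (F : Set Q)
    (T : BTree α) : Prop :=
  ∃ q ∈ F, Run Δ T (some q)

/-- A tree language is regular iff it is the set of trees accepted by some tree automaton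
with finitely many states. -/
def RegularTreeLang (L : Set (BTree α)) : Prop :=
  ∃ (Q : Type) (_ : Fintype Q) (Δ : Option Q → Option Q → α → Q → Prop) (F : Set Q),
    L = {T | TAccepts Δ F T}

/-- The relative number of `n`-node trees in `L`:
`|L ∩ ℬ^Σ_n| / (C_n ⬝ |Σ|^n)`, where `C_n` is the `n`-th Catalan number. -/
noncomputable def density [Fintype α] (L : Set (BTree α)) (n : ℕ) : ℝ :=
  (Nat.card {T : BTree α // T ∈ L ∧ T.size = n} : ℝ) /
    ((catalan n : ℝ) * (Fintype.card α : ℝ) ^ n)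

/-- `L` has asymptotic density `c` if `density L n` tends to `c` as `n → ∞`. -/
def HasDensity [Fintype α] (L : Set (BTree α)) (c : ℝ) : Prop :=
  Tendsto (density L) atTop (𝓝 c)

/-- The upper asymptotic density `P̄_lim(L) = limsup_n density L n`. -/
noncomputable def upperDensity [Fintype α] (L : Set (BTree α)) : ℝ :=
  limsup (density L) atTop

/-- `LT = {conc_a(S, T) : a ∈ Σ, S ∈ L}`. -/
def concL (L : Set (BTree α)) (T : BTree α) : Set (BTree α) :=
  {X | ∃ (a : α) (S : BTree α), S ∈ L ∧ X = BTree.node a S T}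

/-- `LT⁻¹ = {S : ∃ a, conc_a(S, T) ∈ L}`. -/
def quotR (L : Set (BTree α)) (T : BTree α) : Set (BTree α) :=
  {S | ∃ a : α, BTree.node a S T ∈ L}

/-- `T⁻¹L = {S : ∃ a, conc_a(T, S) ∈ L}`. -/
def quotL (T : BTree α) (L : Set (BTree α)) : Set (BTree α) :=
  {S | ∃ a : α, BTree.node a T S ∈ L}

/-- `L[T_k, …, T_1]⁻¹`, where the list is `[T_k, …, T_1]` (so the head is `T_k`):
`L[]⁻¹ = L` and `L[T_k,…,T_1]⁻¹ = (L[T_{k-1},…,T_1]⁻¹)T_k⁻¹ ∪ T_k⁻¹(L[T_{k-1},…,T_1]⁻¹)`. -/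
def quotIter (L : Set (BTree α)) : List (BTree α) → Set (BTree α)
  | [] => L
  | T :: Ts => quotR (quotIter L Ts) T ∪ quotL T (quotIter L Ts)

/-- A state `q` is reachable if some run of the automaton on some tree assigns `q` to the tree. -/
def TReachable {Q : Type*} (Δ : Option Q → Option Q → α → Q → Prop) (q : Q) : Prop :=
  ∃ T : BTree α, Run Δ T (some q)

/-- A set of states `V` is a sink if every transition involving a state of `V` as one of the
two child values leads into `V`. -/
def Sink {Q : Type*} (Δ : Option Q → Option Q → α → Q → Prop) (V : Set Q) : Prop :=
  ∀ q ∈ V, ∀ (q' : Option Q) (a : α) (q'' : Q),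
    (Δ (some q) q' a q'' ∨ Δ q' (some q) a q'') → q'' ∈ V

/-! Let `a n` be the number of `n`-node trees avoiding `S`, `m = |Σ|` and `|S| = k + 1`.
Splitting a tree at its root gives `a (n + 1) ≤ m ∑_{i+j=n} a i a j`, with one tree to spare
(namely `S`) when `n = k`. For `P_N(r) = ∑_{n<N} a n rⁿ` this yields
`P_{N+1}(r) + r^(k+1) ≤ 1 + m r P_N(r)²`, so for `r` slightly above `1 / (4m)`, chosen with
`4 m r - 1 ≤ r^(k+1)`, the bound `P_N(r) ≤ 2` propagates; it holds for `N ≤ k + 1` because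
`∑_{n<N} C_n / 4ⁿ < 2`. Hence `a n ≤ 2 r⁻ⁿ`, exponentially smaller than
`C_n mⁿ ≥ (4m)ⁿ / (2n(n + 1))`. -/

open Finset
open Finset.HasAntidiagonal.antidiagonal (fst_le snd_le)

theorem sum_range_catalan_div_four_pow (N : ℕ) :
    ∑ n ∈ range N, (catalan n : ℝ) / 4 ^ n = 2 - 2 * N.centralBinom / 4 ^ N := by
  induction N with
  | zero => norm_num
  | succ N ih =>
    have hB : ((N : ℝ) + 1) * (N + 1).centralBinom = 2 * (2 * N + 1) * N.centralBinom := by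
      exact_mod_cast Nat.succ_mul_centralBinom_succ N
    have hC : ((N : ℝ) + 1) * catalan N = N.centralBinom := by
      exact_mod_cast succ_mul_catalan_eq_centralBinom N
    have hB' : ((N + 1).centralBinom : ℝ) = 4 * N.centralBinom - 2 * catalan N :=
      mul_left_cancel₀ (by positivity : (N : ℝ) + 1 ≠ 0) (by linear_combination hB + 2 * hC)
    rw [sum_range_succ, ih, hB']
    field_simp
    ring

theorem sum_range_catalan_div_four_pow_lt_two (N : ℕ) :
    ∑ n ∈ range N, (catalan n : ℝ) / 4 ^ n < 2 := by
  rw [sum_range_catalan_div_four_pow]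
  have := N.centralBinom_pos
  linarith [show (0 : ℝ) < 2 * N.centralBinom / 4 ^ N by positivity]

theorem sum_range_sum_antidiagonal_le_sq {x : ℕ → ℝ} (hx : ∀ n, 0 ≤ x n) (N : ℕ) :
    ∑ n ∈ range N, ∑ ij ∈ antidiagonal n, x ij.1 * x ij.2 ≤ (∑ i ∈ range N, x i) ^ 2 := by
  have hdisj : (range N : Set ℕ).PairwiseDisjoint antidiagonal := fun a _ b _ hab =>
    disjoint_left.mpr fun ij hij hij' => hab <| (HasAntidiagonal.mem_antidiagonal.mp hij).symm.trans
      (HasAntidiagonal.mem_antidiagonal.mp hij')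
  rw [← sum_biUnion hdisj, sq, sum_mul_sum, ← sum_product']
  refine sum_le_sum_of_subset_of_nonneg ?_ fun _ _ _ => mul_nonneg (hx _) (hx _)
  intro ij
  simp only [mem_biUnion, mem_range, HasAntidiagonal.mem_antidiagonal, mem_product]
  omega

theorem catalan_pos (n : ℕ) : 0 < catalan n :=
  Nat.pos_of_mul_pos_left ((succ_mul_catalan_eq_centralBinom n).symm ▸ n.centralBinom_pos)

theorem four_pow_le_two_mul_self_mul_succ_mul_catalan {n : ℕ} (hn : 0 < n) :
    4 ^ n ≤ 2 * n * ((n + 1) * catalan n) :=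
  succ_mul_catalan_eq_centralBinom n ▸ Nat.four_pow_le_two_mul_self_mul_centralBinom n hn

section GeneratingFunction

variable {a : ℕ → ℝ} {m r : ℝ}

theorem exists_gt_inv_four_mul_sum_catalan_le_two (hm : 0 < m) (k : ℕ) :
    ∃ r > (4 * m)⁻¹, ∑ n ∈ range (k + 1), catalan n * (m * r) ^ n ≤ 2 ∧
      4 * m * r - 1 ≤ r ^ (k + 1) := by
  set r₀ := (4 * m)⁻¹
  have hmr₀ : m * r₀ = 4⁻¹ := by simp [r₀, hm.ne']
  have hsum : ∀ᶠ r in 𝓝 r₀, ∑ n ∈ range (k + 1), (catalan n : ℝ) * (m * r) ^ n < 2 := by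
    refine ContinuousAt.eventually_lt (by fun_prop) continuousAt_const ?_
    simpa only [hmr₀, inv_pow, div_eq_mul_inv] using sum_range_catalan_div_four_pow_lt_two (k + 1)
  have hgap : ∀ᶠ r in 𝓝 r₀, 4 * m * r - 1 < r ^ (k + 1) := by
    refine ContinuousAt.eventually_lt (by fun_prop) (by fun_prop) ?_
    rw [mul_assoc, hmr₀]
    norm_num [r₀]
    positivity
  obtain ⟨r, ⟨hsum, hgap⟩, hr⟩ :=
    ((hsum.and hgap).filter_mono nhdsWithin_le_nhds |>.and self_mem_nhdsWithin).exists
      (f := 𝓝[>] r₀)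
  exact ⟨r, hr, hsum.le, hgap.le⟩

theorem sum_range_mul_pow_le_sum_catalan (ha : ∀ n, 0 ≤ a n)
    (hcat : ∀ n, a n ≤ catalan n * m ^ n) (hr : 0 ≤ r) {N K : ℕ} (hNK : N ≤ K) :
    ∑ n ∈ range N, a n * r ^ n ≤ ∑ n ∈ range K, catalan n * (m * r) ^ n :=
  calc ∑ n ∈ range N, a n * r ^ n ≤ ∑ n ∈ range K, a n * r ^ n :=
        sum_le_sum_of_subset_of_nonneg (range_subset_range.mpr hNK) fun n _ _ =>
          mul_nonneg (ha n) (pow_nonneg hr n)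
    _ ≤ ∑ n ∈ range K, catalan n * (m * r) ^ n := sum_le_sum fun n _ => by
        rw [mul_pow, ← mul_assoc]
        exact mul_le_mul_of_nonneg_right (hcat n) (pow_nonneg hr n)

theorem sum_range_succ_mul_pow_add_pow_le (hm : 0 ≤ m) (hr : 0 ≤ r) (ha : ∀ n, 0 ≤ a n)
    (ha₀ : a 0 ≤ 1) {k M : ℕ} (hkM : k < M)
    (hrec : ∀ n, a (n + 1) + (if n = k then 1 else 0) ≤
      m * ∑ ij ∈ antidiagonal n, a ij.1 * a ij.2) :
    ∑ n ∈ range (M + 1), a n * r ^ n + r ^ (k + 1) ≤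
      1 + m * r * (∑ n ∈ range M, a n * r ^ n) ^ 2 := by
  have hweighted : ∀ n, a (n + 1) * r ^ (n + 1) + (if n = k then r ^ (n + 1) else 0) ≤
      m * r * ∑ ij ∈ antidiagonal n, (a ij.1 * r ^ ij.1) * (a ij.2 * r ^ ij.2) := fun n =>
    calc a (n + 1) * r ^ (n + 1) + (if n = k then r ^ (n + 1) else 0)
        = (a (n + 1) + (if n = k then 1 else 0)) * r ^ (n + 1) := by split_ifs <;> ring
      _ ≤ (m * ∑ ij ∈ antidiagonal n, a ij.1 * a ij.2) * r ^ (n + 1) :=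
        mul_le_mul_of_nonneg_right (hrec n) (pow_nonneg hr _)
      _ = m * r * ∑ ij ∈ antidiagonal n, (a ij.1 * r ^ ij.1) * (a ij.2 * r ^ ij.2) := by
        rw [mul_sum, mul_sum, sum_mul]
        refine sum_congr rfl fun ij hij => ?_
        rw [← HasAntidiagonal.mem_antidiagonal.mp hij]
        ring
  calc ∑ n ∈ range (M + 1), a n * r ^ n + r ^ (k + 1)
      = a 0 + ∑ n ∈ range M,
          (a (n + 1) * r ^ (n + 1) + (if n = k then r ^ (n + 1) else 0)) := by
        rw [sum_range_succ', sum_add_distrib, sum_ite_eq', if_pos (mem_range.mpr hkM)]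
        ring
    _ ≤ 1 + ∑ n ∈ range M,
          m * r * ∑ ij ∈ antidiagonal n, (a ij.1 * r ^ ij.1) * (a ij.2 * r ^ ij.2) :=
        add_le_add ha₀ (sum_le_sum fun n _ => hweighted n)
    _ ≤ 1 + m * r * (∑ n ∈ range M, a n * r ^ n) ^ 2 := by
        rw [← mul_sum]
        gcongr
        exact sum_range_sum_antidiagonal_le_sq (fun n => mul_nonneg (ha n) (pow_nonneg hr n)) M

theorem exists_sum_range_mul_pow_le_two (hm : 0 < m) (ha : ∀ n, 0 ≤ a n)
    (hcat : ∀ n, a n ≤ catalan n * m ^ n) (k : ℕ)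
    (hrec : ∀ n, a (n + 1) + (if n = k then 1 else 0) ≤
      m * ∑ ij ∈ antidiagonal n, a ij.1 * a ij.2) :
    ∃ r > (4 * m)⁻¹, ∀ N, ∑ n ∈ range N, a n * r ^ n ≤ 2 := by
  obtain ⟨r, hr, hsum, hgap⟩ := exists_gt_inv_four_mul_sum_catalan_le_two hm k
  have hr₀ : 0 ≤ r := (inv_nonneg.mpr (by positivity)).trans hr.le
  refine ⟨r, hr, fun N => ?_⟩
  induction N with
  | zero => simp
  | succ M ih =>
    rcases le_or_gt (M + 1) (k + 1) with hM | hM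
    · exact (sum_range_mul_pow_le_sum_catalan ha hcat hr₀ hM).trans hsum
    · have ha₀ : a 0 ≤ 1 := by simpa using hcat 0
      have hstep := sum_range_succ_mul_pow_add_pow_le hm.le hr₀ ha ha₀ (M := M) (by omega) hrec
      have hP₀ : 0 ≤ ∑ n ∈ range M, a n * r ^ n :=
        sum_nonneg fun n _ => mul_nonneg (ha n) (pow_nonneg hr₀ n)
      have hmr : 0 ≤ m * r := mul_nonneg hm.le hr₀
      nlinarith [mul_le_mul_of_nonneg_left (pow_le_pow_left₀ hP₀ ih 2) hmr]

theorem tendsto_div_catalan_mul_pow_of_mul_pow_le (hm : 0 < m) (hr : (4 * m)⁻¹ < r)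
    (ha : ∀ n, 0 ≤ a n) {C : ℝ} (hC : ∀ n, a n * r ^ n ≤ C) :
    Tendsto (fun n => a n / (catalan n * m ^ n)) atTop (𝓝 0) := by
  set ρ := (4 * m * r)⁻¹
  have hr₀ : 0 < r := (inv_pos.mpr (by positivity)).trans hr
  have hρ : |ρ| < 1 := by
    rw [abs_of_pos (by positivity)]
    exact inv_lt_one_of_one_lt₀ (by rw [inv_lt_iff_one_lt_mul₀ (by positivity)] at hr; linarith)
  have hbound : ∀ n, 0 < n →
      a n / (catalan n * m ^ n) ≤ 2 * C * ((n : ℝ) ^ 2 * ρ ^ n + (n : ℝ) ^ 1 * ρ ^ n) := by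
    intro n hn
    have hcat : (4 : ℝ) ^ n ≤ 2 * n * ((n + 1) * catalan n) := by
      exact_mod_cast four_pow_le_two_mul_self_mul_succ_mul_catalan hn
    have hC_pos : 0 < (catalan n : ℝ) := by exact_mod_cast catalan_pos n
    have hC₀ : 0 ≤ C := (mul_nonneg (ha 0) (pow_nonneg hr₀.le 0)).trans (hC 0)
    rw [div_le_iff₀ (by positivity)]
    calc a n ≤ C / r ^ n := (le_div_iff₀ (pow_pos hr₀ n)).mpr (hC n)
      _ = C * 4 ^ n * ρ ^ n * m ^ n := by
        simp only [ρ, inv_pow, mul_pow]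
        field_simp
      _ ≤ C * (2 * n * ((n + 1) * catalan n)) * ρ ^ n * m ^ n := by gcongr
      _ = _ := by ring
  have hlim := ((tendsto_pow_const_mul_const_pow_of_abs_lt_one 2 hρ).add
    (tendsto_pow_const_mul_const_pow_of_abs_lt_one 1 hρ)).const_mul (2 * C)
  rw [add_zero, mul_zero] at hlim
  refine squeeze_zero' (Eventually.of_forall fun n => by have := ha n; positivity) ?_ hlim
  filter_upwards [eventually_gt_atTop 0] with n hn
  exact hbound n hn

theorem tendsto_div_catalan_mul_pow_of_convolution_le (hm : 0 < m) (ha : ∀ n, 0 ≤ a n)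
    (hcat : ∀ n, a n ≤ catalan n * m ^ n) (k : ℕ)
    (hrec : ∀ n, a (n + 1) + (if n = k then 1 else 0) ≤
      m * ∑ ij ∈ antidiagonal n, a ij.1 * a ij.2) :
    Tendsto (fun n => a n / (catalan n * m ^ n)) atTop (𝓝 0) := by
  obtain ⟨r, hr, hsum⟩ := exists_sum_range_mul_pow_le_two hm ha hcat k hrec
  have hr₀ : 0 ≤ r := (inv_nonneg.mpr (by positivity)).trans hr.le
  refine tendsto_div_catalan_mul_pow_of_mul_pow_le hm hr ha (C := 2) fun n => ?_
  exact (single_le_sum (fun i _ => mul_nonneg (ha i) (pow_nonneg hr₀ i))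
    (self_mem_range_succ n)).trans (hsum (n + 1))

end GeneratingFunction

namespace BTree

theorem size_le_of_subtree {S T : BTree α} (h : Subtree S T) : S.size ≤ T.size := by
  induction h with
  | refl => exact le_rfl
  | left _ ih => simp only [size]; omega
  | right _ ih => simp only [size]; omega

theorem subtree_node_iff {S l r : BTree α} {a : α} :
    Subtree S (node a l r) ↔ S = node a l r ∨ Subtree S l ∨ Subtree S r := by
  refine ⟨fun h => ?_, ?_⟩
  · cases h with
    | refl => exact .inl rfl
    | left h => exact .inr (.inl h)
    | right h => exact .inr (.inr h)
  · rintro (rfl | h | h)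
    exacts [.refl _, .left h, .right h]

deriving instance DecidableEq for BTree

variable [DecidableEq α] [Fintype α]

abbrev pairNode (a : α) (s t : Finset (BTree α)) : Finset (BTree α) :=
  (s ×ˢ t).map ⟨fun x => node a x.1 x.2, fun ⟨x₁, x₂⟩ ⟨y₁, y₂⟩ h => by simpa using h⟩

def nodes (s : ℕ → Finset (BTree α)) (n : ℕ) : Finset (BTree α) :=
  (univ ×ˢ antidiagonal n).biUnion fun p => pairNode p.1 (s p.2.1) (s p.2.2)

theorem mem_nodes {s : ℕ → Finset (BTree α)} {n : ℕ} {T : BTree α} :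
    T ∈ nodes s n ↔ ∃ a l r i j, i + j = n ∧ l ∈ s i ∧ r ∈ s j ∧ T = node a l r := by
  simp only [nodes, mem_biUnion, mem_product, mem_univ, true_and, Finset.mem_map,
    Prod.exists, HasAntidiagonal.mem_antidiagonal]
  aesop

def treesOfSize : ℕ → Finset (BTree α)
  | 0 => {nil}
  | n + 1 => (univ ×ˢ (antidiagonal n).attach).biUnion fun p =>
      pairNode p.1 (treesOfSize p.2.1.1) (treesOfSize p.2.1.2)
  decreasing_by
    · have := fst_le p.2.2; omega
    · have := snd_le p.2.2; omega

theorem treesOfSize_succ (n : ℕ) :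
    (treesOfSize (n + 1) : Finset (BTree α)) = nodes treesOfSize n := by
  rw [treesOfSize]
  ext
  simp [nodes]

@[simp]
theorem mem_treesOfSize {T : BTree α} {n : ℕ} : T ∈ treesOfSize n ↔ T.size = n := by
  induction T generalizing n with
  | nil => cases n <;> simp [treesOfSize, treesOfSize_succ, mem_nodes, size]
  | node a l r ihl ihr =>
    cases n with
    | zero => simp [treesOfSize, size]
    | succ n => simp [treesOfSize_succ, mem_nodes, size, ihl, ihr]

theorem card_nodes_le (s : ℕ → Finset (BTree α)) (n : ℕ) :
    #(nodes s n) ≤ Fintype.card α * ∑ ij ∈ antidiagonal n, #(s ij.1) * #(s ij.2) := by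
  refine card_biUnion_le.trans_eq ?_
  simp [sum_product]

theorem card_treesOfSize (n : ℕ) :
    #(treesOfSize n : Finset (BTree α)) = catalan n * Fintype.card α ^ n := by
  induction n using Nat.strong_induction_on with
  | _ n ih =>
  rcases n with _ | n
  · simp [treesOfSize]
  rw [treesOfSize_succ, nodes, card_biUnion, sum_product]
  · calc ∑ a, ∑ ij ∈ antidiagonal n, #(pairNode a (treesOfSize ij.1) (treesOfSize ij.2))
        = ∑ _a : α, ∑ ij ∈ antidiagonal n, catalan ij.1 * catalan ij.2 * Fintype.card α ^ n := by
          refine sum_congr rfl fun a _ => sum_congr rfl fun ij hij => ?_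
          have hn := HasAntidiagonal.mem_antidiagonal.mp hij
          rw [card_map, card_product, ih _ (by omega), ih _ (by omega), ← hn]
          ring
      _ = catalan (n + 1) * Fintype.card α ^ (n + 1) := by
          rw [sum_const, card_univ, ← sum_mul, catalan_succ', smul_eq_mul, pow_succ]
          ring
  · rintro ⟨a, i, j⟩ - ⟨b, k, l⟩ - hne
    simp only [Function.onFun, disjoint_left, Finset.mem_map, mem_product, mem_treesOfSize]
    rintro _ ⟨⟨x, y⟩, ⟨rfl, rfl⟩, rfl⟩ ⟨⟨x', y'⟩, ⟨hx, hy⟩, h⟩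
    obtain ⟨rfl, rfl, rfl⟩ := node.inj (h : node b x' y' = node a x y)
    exact hne (by simp [← hx, ← hy])

open scoped Classical in
noncomputable def avoiding (S : BTree α) (n : ℕ) : Finset (BTree α) :=
  (treesOfSize n).filter fun T => ¬ Subtree S T

theorem mem_avoiding {S T : BTree α} {n : ℕ} :
    T ∈ avoiding S n ↔ T.size = n ∧ ¬ Subtree S T := by
  simp [avoiding]

theorem card_avoiding_le (S : BTree α) (n : ℕ) :
    #(avoiding S n) ≤ catalan n * Fintype.card α ^ n :=
  card_treesOfSize (α := α) n ▸ card_le_card fun _ hT => mem_treesOfSize.mpr (mem_avoiding.mp hT).1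

theorem avoiding_succ_subset_nodes (S : BTree α) (n : ℕ) :
    avoiding S (n + 1) ⊆ nodes (avoiding S) n := by
  intro T hT
  obtain ⟨hsize, hS⟩ := mem_avoiding.mp hT
  cases T with
  | nil => simp [size] at hsize
  | node a l r =>
    simp only [subtree_node_iff, not_or] at hS
    simp only [size] at hsize
    exact mem_nodes.mpr ⟨a, l, r, l.size, r.size, by omega, mem_avoiding.mpr ⟨rfl, hS.2.1⟩,
      mem_avoiding.mpr ⟨rfl, hS.2.2⟩, rfl⟩

theorem self_mem_nodes_avoiding {S : BTree α} {n : ℕ} (hS : S.size = n + 1) :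
    S ∈ nodes (avoiding S) n := by
  cases S with
  | nil => simp [size] at hS
  | node a l r =>
    have hl : ¬ Subtree (node a l r) l := fun h => by
      have := size_le_of_subtree h; simp only [size] at this; omega
    have hr : ¬ Subtree (node a l r) r := fun h => by
      have := size_le_of_subtree h; simp only [size] at this; omega
    simp only [size] at hS
    exact mem_nodes.mpr ⟨a, l, r, l.size, r.size, by omega, mem_avoiding.mpr ⟨rfl, hl⟩,
      mem_avoiding.mpr ⟨rfl, hr⟩, rfl⟩

theorem card_avoiding_succ_add_le {S : BTree α} {k : ℕ} (hS : S.size = k + 1) (n : ℕ) :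
    #(avoiding S (n + 1)) + (if n = k then 1 else 0) ≤
      Fintype.card α * ∑ ij ∈ antidiagonal n, #(avoiding S ij.1) * #(avoiding S ij.2) := by
  refine le_trans ?_ (card_nodes_le _ n)
  split_ifs with h
  · subst h
    rw [← card_insert_of_notMem fun h => (mem_avoiding.mp h).2 (.refl S)]
    exact card_le_card (insert_subset (self_mem_nodes_avoiding hS) (avoiding_succ_subset_nodes S n))
  · simpa using card_le_card (avoiding_succ_subset_nodes S n)

end BTree

open BTree

theorem density_setOf_eq_card_filter [Fintype α] [DecidableEq α] (p : BTree α → Prop)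
    [DecidablePred p] (n : ℕ) :
    density {T | p T} n =
      #((treesOfSize n).filter p) / ((catalan n : ℝ) * (Fintype.card α : ℝ) ^ n) := by
  rw [density, ← Nat.card_eq_finsetCard,
    Nat.card_congr (Equiv.subtypeEquivRight (q := (· ∈ (treesOfSize n).filter p))
      fun T => by simp [and_comm])]

theorem density_add_density_compl [Fintype α] [Nonempty α] (L : Set (BTree α)) (n : ℕ) :
    density L n + density Lᶜ n = 1 := by
  classical
  rw [← L.ofPred_mem_eq, Set.compl_ofPred, density_setOf_eq_card_filter,
    density_setOf_eq_card_filter, ← add_div, ← Nat.cast_add, card_filter_add_card_filter_not,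
    card_treesOfSize, Nat.cast_mul, Nat.cast_pow, div_self]
  have := catalan_pos n
  positivity

theorem density_compl_subtree [Fintype α] [DecidableEq α] (S : BTree α) (n : ℕ) :
    density {T | Subtree S T}ᶜ n =
      #(avoiding S n) / ((catalan n : ℝ) * (Fintype.card α : ℝ) ^ n) := by
  classical
  rw [Set.compl_ofPred, density_setOf_eq_card_filter]
  rfl

/-- For every nonempty tree `S`, the set of trees containing `S` as a subtree
has asymptotic density 1. -/
theorem infinite_monkey_trees {α : Type*} [Fintype α] [Nonempty α]
    (S : BTree α) (hS : S ≠ BTree.nil) :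
    HasDensity {T : BTree α | BTree.Subtree S T} 1 := by
  classical
  obtain ⟨k, hk⟩ : ∃ k, S.size = k + 1 := by
    cases S with
    | nil => exact absurd rfl hS
    | node => exact ⟨_, rfl⟩
  have hcompl : Tendsto (density {T | Subtree S T}ᶜ) atTop (𝓝 0) := by
    refine (tendsto_div_catalan_mul_pow_of_convolution_le (a := fun n => (#(avoiding S n) : ℝ))
      (m := Fintype.card α) (by exact_mod_cast Fintype.card_pos) (fun n => Nat.cast_nonneg _)
      (fun n => by exact_mod_cast card_avoiding_le S n) k
      (fun n => by exact_mod_cast card_avoiding_succ_add_le hk n)).congr fun n => ?_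
    rw [density_compl_subtree]
  have h := (tendsto_const_nhds (x := (1 : ℝ))).sub hcompl
  rw [sub_zero] at h
  exact h.congr fun n => (eq_sub_of_add_eq (density_add_density_compl _ n)).symm

end Sparse
end

section
/- Let Σ be a finite nonempty alphabet and let U, V ⊆ Σ* be regular languages with U nonempty such that V* is infix complete. Then there exists a word x ∈ Σ* such that μ({ζ ∈ Σ^ω : x is a prefix of ζ} \ U·V^ω) = 0, where μ is the Bernoulli measure on Σ^ω; equivalently, the conditional probability that a random ω-word lies in U·V^ω given that it has prefix x equals 1. -/
/-!
Let `L = V∗`. Being regular, `L` has finitely many left quotients, and infix completeness then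
gives a nonempty word `x` after which every word `s` has a completion `x s y ∈ L` with `|y| ≤ B`.
Whatever has been read, each fresh block of `B + |x|` letters starts with the completion of the
word read since the last occurrence of `x`, followed by `x` again, with probability at least
`|Σ|^-(B + |x|)`; so almost surely this eventually happens after every occurrence of `x`.
Starting from the occurrence of `x` right after `u ∈ U`, this cuts almost every ω-word with prefix
`u x` into `u` followed by infinitely many words of `L`.
-/

open Filter Topology MeasureTheory

namespace Sparse

variable {α : Type*}

/-- The finite word `w` is a prefix of the ω-word `ζ`. -/
def PrefixO (w : List α) (ζ : ℕ → α) : Prop :=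
  ∀ i : Fin w.length, ζ i = w.get i

/-- Concatenation `w · ζ` of a finite word with an ω-word. -/
def appendO (w : List α) (ζ : ℕ → α) : ℕ → α :=
  fun n => if h : n < w.length then w.get ⟨n, h⟩ else ζ (n - w.length)

/-- The concatenation `v 0 · v 1 · ⋯ · v (k-1)` of the first `k` words of a sequence of words. -/
def joinUpTo (v : ℕ → List α) (k : ℕ) : List α :=
  (List.ofFn (fun i : Fin k => v i)).flatten

/-- `V^ω`: the set of ω-words of the form `v₁ · v₂ · v₃ ⋯` with all `vᵢ ∈ V`.  An ω-word `ζ` is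
such an infinite concatenation iff each finite concatenation `v₁ ⋯ v_k` is a prefix of `ζ` and
the lengths of these finite concatenations tend to infinity. -/
def omegaPow (V : Set (List α)) : Set (ℕ → α) :=
  {ζ | ∃ v : ℕ → List α, (∀ i, v i ∈ V) ∧
    Tendsto (fun k => (joinUpTo v k).length) atTop atTop ∧
    ∀ k, PrefixO (joinUpTo v k) ζ}

/-- `U · V^ω = {u · v₁ · v₂ ⋯ : u ∈ U, v₁, v₂, … ∈ V}`. -/
def catOmega (U V : Set (List α)) : Set (ℕ → α) :=
  {ζ | ∃ u ∈ U, ∃ ξ ∈ omegaPow V, ζ = appendO u ξ}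

/-- An ω-word `ξ` is rich if every finite word `v` occurs as a factor of `ξ`,
i.e. `ξ = x · v · y` for some finite word `x` and ω-word `y`. -/
def Rich (ξ : ℕ → α) : Prop :=
  ∀ v : List α, ∃ (x : List α) (y : ℕ → α), ξ = appendO (x ++ v) y

/-- `V* `: the set of finite concatenations of words from `V`. -/
def star (V : Set (List α)) : Set (List α) :=
  {w | ∃ l : List (List α), (∀ v ∈ l, v ∈ V) ∧ w = l.flatten}

/-- A language of finite words is regular iff it is accepted by a DFA. -/
def RegularLang (L : Set (List α)) : Prop :=
  ∃ (σ : Type) (_ : Fintype σ) (M : DFA α σ), L = M.accepts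

/-- `L` is infix complete if every finite word occurs as an infix of a word of `L`. -/
def InfixComplete (L : Set (List α)) : Prop :=
  ∀ w : List α, ∃ x y : List α, x ++ w ++ y ∈ L

end Sparse

open Computability

namespace Language

variable {α : Type*} {L : Language α}

theorem append_mem_kstar {x y : List α} (hx : x ∈ L∗) (hy : y ∈ L∗) : x ++ y ∈ L∗ :=
  kstar_mul_kstar L ▸ append_mem_mul hx hy

theorem exists_append_of_mem_kstar {w : List α} (hw : w ∈ L∗) (hne : w ≠ []) :
    ∃ v r, v ∈ L ∧ v ≠ [] ∧ r ∈ L∗ ∧ w = v ++ r := by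
  obtain ⟨S, rfl, hS⟩ := mem_kstar.1 hw
  induction S with
  | nil => exact absurd rfl hne
  | cons v S ih =>
    by_cases hv : v = []
    · subst hv
      exact ih (fun y hy => hS y (.tail _ hy)) (by simpa using hw) (by simpa using hne)
    · exact ⟨v, S.flatten, hS v (.head _), hv, mem_kstar.2 ⟨S, rfl, fun y hy => hS y (.tail _ hy)⟩,
        rfl⟩

/-- The second case completes the last, unfinished factor `s` of `w`. -/
theorem mem_leftQuotient_kstar {w y : List α} :
    y ∈ (L∗).leftQuotient w ↔
      (w ∈ L∗ ∧ y ∈ L∗) ∨ ∃ p s, p ++ s = w ∧ p ∈ L∗ ∧ y ∈ L.leftQuotient s * L∗ := by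
  constructor
  · intro h
    obtain ⟨S, hS, hSL⟩ := mem_kstar.1 h
    have hflat : ∀ S', S' ⊆ S → S'.flatten ∈ L∗ := fun S' hS' =>
      mem_kstar.2 ⟨S', rfl, fun v hv => hSL v (hS' hv)⟩
    rcases List.append_eq_flatten_iff.1 hS with
      ⟨A, B, rfl, rfl, rfl⟩ | ⟨A, s, c, cs, D, rfl, rfl, rfl⟩
    · exact .inl ⟨hflat A fun _ hv => by simp [hv], hflat B fun _ hv => by simp [hv]⟩
    · exact .inr ⟨A.flatten, s, rfl, hflat A fun _ hv => by simp [hv],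
        append_mem_mul (hSL _ (by simp)) (hflat D fun _ hv => by simp [hv])⟩
  · rintro (⟨hw, hy⟩ | ⟨p, s, rfl, hp, hy⟩)
    · exact append_mem_kstar hw hy
    · obtain ⟨y₁, hy₁, y₂, hy₂, rfl⟩ := mem_mul.1 hy
      have hsy : s ++ y₁ ∈ L∗ := le_kstar (a := L) hy₁
      simpa [mem_leftQuotient, List.append_assoc] using
        append_mem_kstar hp (append_mem_kstar hsy hy₂)

/-- `(L∗).leftQuotient w` only depends on whether `w ∈ L∗` and on the set of quotients of `L` by
the unfinished last factors of `w`. -/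
theorem IsRegular.kstar (h : L.IsRegular) : (L∗).IsRegular := by
  rw [isRegular_iff_finite_range_leftQuotient] at *
  let F : Prop × Set (Language α) → Language α := fun bQ =>
    {y | (bQ.1 ∧ y ∈ L∗) ∨ ∃ q ∈ bQ.2, y ∈ q * L∗}
  refine ((Set.finite_univ.prod h.finite_subsets).image F).subset ?_
  rintro _ ⟨w, rfl⟩
  refine ⟨(w ∈ L∗, {q | ∃ p s, p ++ s = w ∧ p ∈ L∗ ∧ L.leftQuotient s = q}),
    ⟨trivial, fun q ⟨_, s, _, _, hq⟩ => ⟨s, hq⟩⟩, ?_⟩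
  ext y
  rw [mem_leftQuotient_kstar]
  exact or_congr_right ⟨fun ⟨_, ⟨p, s, hw, hp, hq⟩, hy⟩ => ⟨p, s, hw, hp, hq ▸ hy⟩,
    fun ⟨p, s, hw, hp, hy⟩ => ⟨_, ⟨p, s, hw, hp, rfl⟩, hy⟩⟩

/-- Take `w` killing a maximal set of left quotients `K` (those with `w ++ y ∉ K` for all `y`)
and `x` with `x ++ w` completable. If `x ++ w ++ s` were not completable, `w ++ s` would kill
`L.leftQuotient x` on top of everything `w` kills. -/
theorem exists_forall_exists_append_mem (hfin : (Set.range L.leftQuotient).Finite)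
    (hinf : ∀ w, ∃ x y, x ++ w ++ y ∈ L) : ∃ x, ∀ s, ∃ y, x ++ s ++ y ∈ L := by
  let killed : List α → Set (Language α) := fun w =>
    {K | K ∈ Set.range L.leftQuotient ∧ ∀ y, w ++ y ∉ K}
  have hkilled_mono : ∀ w s, killed w ⊆ killed (w ++ s) := fun w s K ⟨hK, hKw⟩ =>
    ⟨hK, fun y => by simpa using hKw (s ++ y)⟩
  obtain ⟨_, ⟨w, rfl⟩, hmax⟩ := (hfin.finite_subsets.subset
    (Set.range_subset_iff.2 fun w => Set.sep_subset _ _)).exists_maximal (Set.range_nonempty killed)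
  obtain ⟨x, y, hxy⟩ := hinf w
  refine ⟨x ++ w, fun s => by_contra fun hdead => ?_⟩
  have hx : L.leftQuotient x ∈ killed (w ++ s) :=
    ⟨⟨x, rfl⟩, fun z hz => hdead ⟨z, by simpa using hz⟩⟩
  exact (hmax ⟨_, rfl⟩ (hkilled_mono w s) hx).2 y (by simpa using hxy)

theorem exists_bounded_completion (hfin : (Set.range L.leftQuotient).Finite) :
    ∃ B, ∃ c : List α → List α, ∀ w, (c w).length ≤ B ∧ ((∃ y, w ++ y ∈ L) → w ++ c w ∈ L) := by
  classical
  let pick : Language α → List α := fun K => if h : ∃ y, y ∈ K then h.choose else []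
  obtain ⟨B, hB⟩ := (hfin.image fun K => (pick K).length).bddAbove
  refine ⟨B, fun w => pick (L.leftQuotient w), fun w => ⟨hB ⟨_, ⟨w, rfl⟩, rfl⟩, fun h => ?_⟩⟩
  have h' : ∃ y, y ∈ L.leftQuotient w := h
  change w ++ pick (L.leftQuotient w) ∈ L
  rw [show pick (L.leftQuotient w) = h'.choose from dif_pos h']
  exact h'.choose_spec

theorem exists_ne_nil_bounded_completion [Nonempty α]
    (hfin : (Set.range L.leftQuotient).Finite) (hinf : ∀ w, ∃ x y, x ++ w ++ y ∈ L) :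
    ∃ x ≠ [], ∃ B, ∃ c : List α → List α, ∀ s, (c s).length ≤ B ∧ x ++ s ++ c s ∈ L := by
  obtain ⟨x, hx⟩ := exists_forall_exists_append_mem hfin hinf
  obtain ⟨B, c, hc⟩ := exists_bounded_completion hfin
  let a : α := Classical.arbitrary α
  refine ⟨x ++ [a], by simp, B, fun s => c (x ++ [a] ++ s), fun s => ⟨(hc _).1, (hc _).2 ?_⟩⟩
  simpa using hx (a :: s)

end Language

namespace Sparse

open Language
open scoped ENNReal

variable {α : Type*}

theorem mem_star_iff {V : Language α} {w : List α} : w ∈ star V ↔ w ∈ V∗ :=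
  (exists_congr fun _ => and_comm).trans mem_kstar.symm

theorem RegularLang.isRegular {L : Language α} (h : RegularLang L) : L.IsRegular := by
  obtain ⟨σ, hσ, M, hM⟩ := h
  exact ⟨σ, hσ, M, hM.symm⟩

theorem prefixO_iff_take_eq {w : List α} {ζ : Stream' α} : PrefixO w ζ ↔ ζ.take w.length = w := by
  refine ⟨fun h => List.ext_getElem (by simp) fun i hi _ => ?_, fun h i => ?_⟩
  · rw [Stream'.take_get]
    exact h ⟨i, by simpa using hi⟩
  · exact (Stream'.take_get i.1 w.length ζ (by simp)).symm.trans (List.getElem_of_eq h _)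

theorem prefixO_take (ζ : Stream' α) (n : ℕ) : PrefixO (ζ.take n) ζ :=
  prefixO_iff_take_eq.2 (by rw [Stream'.length_take])

theorem prefixO_append {v r : List α} {ζ : Stream' α} :
    PrefixO (v ++ r) ζ ↔ PrefixO v ζ ∧ PrefixO r (ζ.drop v.length) := by
  simp only [prefixO_iff_take_eq, List.length_append, Stream'.take_add]
  exact ⟨fun h => List.append_inj h (by simp), fun ⟨h₁, h₂⟩ => by rw [h₁, h₂]⟩

theorem prefixO_of_isPrefix_take {w : List α} {ζ : Stream' α} {n : ℕ} (h : w <+: ζ.take n) :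
    PrefixO w ζ := by
  obtain ⟨t, ht⟩ := h
  have := prefixO_take ζ n
  rw [← ht, prefixO_append] at this
  exact this.1

theorem appendO_eq_appendStream' (w : List α) (ζ : Stream' α) : appendO w ζ = w ++ₛ ζ := by
  funext n
  unfold appendO
  split_ifs with h
  · exact (Stream'.get_append_left n w ζ h).symm
  · obtain ⟨m, rfl⟩ := Nat.exists_eq_add_of_le (not_lt.1 h)
    rw [Nat.add_sub_cancel_left]
    exact (Stream'.get_append_right m w ζ).symm

theorem joinUpTo_succ (v : ℕ → List α) (k : ℕ) : joinUpTo v (k + 1) = joinUpTo v k ++ v k := by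
  rw [joinUpTo, joinUpTo, List.ofFn_succ', List.concat_eq_append, List.flatten_append]
  simp

theorem mem_omegaPow_of_forall_exists {V : Language α} {ξ : Stream' α} (P : ℕ → Prop)
    (h0 : P 0) (hstep : ∀ K, P K → ∃ v ∈ V, v ≠ [] ∧ PrefixO v (ξ.drop K) ∧ P (K + v.length)) :
    ξ ∈ omegaPow V := by
  choose! v hvV hvne hvξ hvP using hstep
  let k : ℕ → ℕ := fun i => (fun K => K + (v K).length)^[i] 0
  have hk : ∀ i, k (i + 1) = k i + (v (k i)).length := fun i => Function.iterate_succ_apply' _ _ _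
  have hP : ∀ i, P (k i) := fun i => by
    induction i with
    | zero => exact h0
    | succ i ih => rw [hk]; exact hvP _ ih
  have hjoin : ∀ i, PrefixO (joinUpTo (fun i => v (k i)) i) ξ ∧
      (joinUpTo (fun i => v (k i)) i).length = k i := fun i => by
    induction i with
    | zero => exact ⟨fun i => i.elim0, rfl⟩
    | succ i ih =>
      rw [joinUpTo_succ, prefixO_append, List.length_append, ih.2, hk]
      exact ⟨⟨ih.1, hvξ _ (hP i)⟩, rfl⟩
  have hk_mono : StrictMono k := strictMono_nat_of_lt_succ fun i => by
    rw [hk]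
    exact Nat.lt_add_of_pos_right (List.length_pos_iff.2 (hvne _ (hP i)))
  refine ⟨fun i => v (k i), fun i => hvV _ (hP i), ?_, fun i => (hjoin i).1⟩
  simp only [fun i => (hjoin i).2]
  exact tendsto_atTop_mono hk_mono.id_le tendsto_id

/-- Steps by nonempty words of `V∗` are refined into steps by their first nonempty factor in `V`,
keeping track of the rest of the pending `V∗`-word. -/
theorem mem_omegaPow_of_forall_exists_kstar {V : Language α} {ξ : Stream' α} (P : ℕ → Prop)
    (h0 : P 0) (hstep : ∀ K, P K →
      ∃ w ∈ V∗, w ≠ [] ∧ PrefixO w (ξ.drop K) ∧ P (K + w.length)) :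
    ξ ∈ omegaPow V := by
  refine mem_omegaPow_of_forall_exists
    (fun K => ∃ w ∈ V∗, PrefixO w (ξ.drop K) ∧ P (K + w.length))
    ⟨[], nil_mem_kstar _, fun i => i.elim0, h0⟩ ?_
  rintro K ⟨w₀, hw₀, hw₀ξ, hP₀⟩
  obtain ⟨w₁, hw₁, hw₁ne, hw₁ξ, hP₁⟩ := hstep _ hP₀
  obtain ⟨v, r, hv, hvne, hr, hvr⟩ :=
    exists_append_of_mem_kstar (append_mem_kstar hw₀ hw₁) (by simp [hw₁ne])
  have hξ : PrefixO (v ++ r) (ξ.drop K) := by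
    rw [← hvr, prefixO_append, Stream'.drop_drop]
    exact ⟨hw₀ξ, hw₁ξ⟩
  rw [prefixO_append, Stream'.drop_drop] at hξ
  have hlen : v.length + r.length = w₀.length + w₁.length := by
    simpa using congrArg List.length hvr.symm
  exact ⟨v, hv, hvne, hξ.1, r, hr, hξ.2, by rwa [add_assoc, hlen, ← add_assoc]⟩

theorem mem_catOmega_of_forall_exists {U : Set (List α)} {V : Language α} {u : List α} (hu : u ∈ U)
    {ζ : Stream' α} (huζ : PrefixO u ζ) (P : ℕ → Prop) (h0 : P u.length)
    (hstep : ∀ K, P K →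
      ∃ w ∈ V∗, w ≠ [] ∧ PrefixO w (ζ.drop K) ∧ P (K + w.length)) :
    ζ ∈ catOmega U V := by
  refine ⟨u, hu, ζ.drop u.length, mem_omegaPow_of_forall_exists_kstar (fun K => P (u.length + K))
    h0 fun K hK => ?_, ?_⟩
  · obtain ⟨w, hw, hwne, hwζ, hP⟩ := hstep _ hK
    exact ⟨w, hw, hwne, by rwa [Stream'.drop_drop], by rwa [← add_assoc]⟩
  · rw [appendO_eq_appendStream']
    nth_rw 1 [← prefixO_iff_take_eq.1 huζ]
    exact (Stream'.append_take_drop _ _).symm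

def words (α : Type*) [Fintype α] (n : ℕ) : Finset (List α) :=
  Finset.univ.map (⟨List.ofFn, List.ofFn_injective⟩ : (Fin n → α) ↪ List α)

section Measure

variable [Fintype α]

theorem mem_words {n : ℕ} {w : List α} : w ∈ words α n ↔ w.length = n := by
  refine ⟨?_, fun h => ?_⟩
  · simp only [words, Finset.mem_map, Finset.mem_univ, true_and]
    rintro ⟨f, rfl⟩
    exact List.length_ofFn
  · subst h
    exact Finset.mem_map.2 ⟨w.get, Finset.mem_univ _, List.ofFn_get w⟩

theorem card_words (n : ℕ) : (words α n).card = Fintype.card α ^ n := by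
  simp [words]

theorem card_filter_not_isPrefix_le [Nonempty α] [DecidableEq α] {p : List α} {n : ℕ}
    (hp : p.length ≤ n) :
    ((words α n).filter fun w => ¬ p <+: w).card ≤ Fintype.card α ^ n - 1 := by
  set w₀ := p ++ List.replicate (n - p.length) (Classical.arbitrary α)
  have hw₀ : w₀ ∈ words α n := mem_words.2 (by simp [w₀]; omega)
  calc _ ≤ ((words α n).erase w₀).card := Finset.card_le_card fun w hw => by
        rw [Finset.mem_filter] at hw
        exact Finset.mem_erase.2 ⟨fun h => hw.2 (h ▸ List.prefix_append _ _), hw.1⟩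
    _ = _ := by rw [Finset.card_erase_of_mem hw₀, card_words]

/-- Each block of length `T` rules out at least the word that starts with the pattern. -/
theorem exists_finset_take_mem [Nonempty α] {T : ℕ} {g : List α → List α}
    (hg : ∀ z, (g z).length ≤ T) (N j : ℕ) :
    ∃ Z : Finset (List α), (∀ z ∈ Z, z.length = N + j * T) ∧
      (∀ ζ : Stream' α, (∀ i, ¬ PrefixO (g (ζ.take (N + i * T))) (ζ.drop (N + i * T))) →
        ζ.take (N + j * T) ∈ Z) ∧
      Z.card ≤ Fintype.card α ^ N * (Fintype.card α ^ T - 1) ^ j := by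
  classical
  induction j with
  | zero =>
    exact ⟨words α N, fun z hz => by simpa using mem_words.1 hz,
      fun ζ _ => mem_words.2 (by simp), by simp [card_words]⟩
  | succ j ih =>
    obtain ⟨Z, hZlen, hZ, hZcard⟩ := ih
    refine ⟨Z.biUnion fun z => ((words α T).filter fun w => ¬ g z <+: w).image (z ++ ·),
      ?_, fun ζ hζ => ?_, ?_⟩
    · simp only [Finset.mem_biUnion, Finset.mem_image, Finset.mem_filter, mem_words]
      rintro _ ⟨z, hz, w, ⟨hw, -⟩, rfl⟩
      rw [List.length_append, hZlen z hz, hw]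
      ring
    · rw [show N + (j + 1) * T = N + j * T + T by ring, Stream'.take_add]
      refine Finset.mem_biUnion.2 ⟨_, hZ ζ hζ, Finset.mem_image.2 ⟨_, Finset.mem_filter.2
        ⟨mem_words.2 (Stream'.length_take _ _), fun h => hζ j (prefixO_of_isPrefix_take h)⟩, rfl⟩⟩
    · calc _ ≤ ∑ z ∈ Z, (((words α T).filter fun w => ¬ g z <+: w).image (z ++ ·)).card :=
            Finset.card_biUnion_le
        _ ≤ ∑ _z ∈ Z, (Fintype.card α ^ T - 1) := Finset.sum_le_sum fun z _ =>
            Finset.card_image_le.trans (card_filter_not_isPrefix_le (hg z))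
        _ ≤ _ := by
          rw [Finset.sum_const, smul_eq_mul, pow_succ, ← mul_assoc]
          exact Nat.mul_le_mul_right _ hZcard

variable [MeasurableSpace α]

theorem measure_le_card_mul {μ : Measure (ℕ → α)}
    (hμ : ∀ w : List α, μ {ζ | PrefixO w ζ} = ((Fintype.card α : ℝ≥0∞))⁻¹ ^ w.length)
    {S : Set (ℕ → α)} {Z : Finset (List α)} {n : ℕ} (hZ : ∀ z ∈ Z, z.length = n)
    (hS : ∀ ζ ∈ S, Stream'.take n ζ ∈ Z) :
    μ S ≤ Z.card * ((Fintype.card α : ℝ≥0∞))⁻¹ ^ n :=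
  calc μ S ≤ μ (⋃ z ∈ Z, {ζ | PrefixO z ζ}) :=
        measure_mono fun ζ hζ => Set.mem_biUnion (hS ζ hζ) (prefixO_take ζ n)
    _ ≤ ∑ z ∈ Z, μ {ζ | PrefixO z ζ} := measure_biUnion_finset_le Z _
    _ = _ := by
      rw [Finset.sum_congr rfl fun z hz => by rw [hμ, hZ z hz], Finset.sum_const, nsmul_eq_mul]

/-- Whatever has been read, each block of length `T` misses the pattern with probability at most
`1 - |α|⁻ᵀ`. -/
theorem ae_exists_prefixO_drop [Nonempty α] {μ : Measure (ℕ → α)}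
    (hμ : ∀ w : List α, μ {ζ | PrefixO w ζ} = ((Fintype.card α : ℝ≥0∞))⁻¹ ^ w.length)
    {T : ℕ} {g : List α → List α} (hg : ∀ z, (g z).length ≤ T) (N : ℕ) :
    ∀ᵐ ζ ∂μ, ∃ j : ℕ, PrefixO (g (Stream'.take (N + j * T) ζ)) (Stream'.drop (N + j * T) ζ) := by
  refine ae_iff.2 ?_
  set c : ℝ≥0∞ := (Fintype.card α : ℝ≥0∞)
  have hc : c * c⁻¹ = 1 :=
    ENNReal.mul_inv_cancel (by simp [c]) (ENNReal.natCast_ne_top _)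
  set r : ℝ≥0∞ := ((Fintype.card α ^ T - 1 : ℕ) : ℝ≥0∞) * c⁻¹ ^ T
  have hr : r < 1 := by
    rw [show r = _ / c ^ T from by rw [div_eq_mul_inv, ENNReal.inv_pow]]
    refine ENNReal.div_lt_of_lt_mul ?_
    rw [one_mul, show c ^ T = ((Fintype.card α ^ T : ℕ) : ℝ≥0∞) by simp [c]]
    exact Nat.cast_lt.2 (Nat.sub_lt (pow_pos Fintype.card_pos T) one_pos)
  have hbound : ∀ j, μ {ζ | ¬ ∃ j, PrefixO (g (Stream'.take (N + j * T) ζ))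
      (Stream'.drop (N + j * T) ζ)} ≤ r ^ j := fun j => by
    obtain ⟨Z, hZlen, hZ, hZcard⟩ := exists_finset_take_mem hg N j
    calc _ ≤ Z.card * c⁻¹ ^ (N + j * T) :=
          measure_le_card_mul hμ hZlen fun ζ hζ => hZ ζ (not_exists.1 hζ)
      _ ≤ ((Fintype.card α ^ N * (Fintype.card α ^ T - 1) ^ j : ℕ) : ℝ≥0∞) *
            c⁻¹ ^ (N + j * T) := by gcongr
      _ = (c * c⁻¹) ^ N * r ^ j := by
          simp only [r, c, Nat.cast_mul, Nat.cast_pow]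
          ring
      _ = r ^ j := by rw [hc, one_pow, one_mul]
  exact nonpos_iff_eq_zero.1
    (ge_of_tendsto' (ENNReal.tendsto_pow_atTop_nhds_zero_of_lt_one hr) hbound)

end Measure

/-- The witness is `x ++ s ++ c s`, where `s` is the word of length `i` following the occurrence
of `x` at `K`. -/
theorem exists_mem_prefixO_drop {L : Language α} {x : List α} (hx : x ≠ [])
    {c : List α → List α} (hc : ∀ s, x ++ s ++ c s ∈ L) {ζ : Stream' α} {K i : ℕ}
    (hK : PrefixO x (ζ.drop K))
    (hi : PrefixO (c ((ζ.take (K + x.length + i)).drop (K + x.length)) ++ x)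
      (ζ.drop (K + x.length + i))) :
    ∃ w ∈ L, w ≠ [] ∧ PrefixO w (ζ.drop K) ∧ PrefixO x (ζ.drop (K + w.length)) := by
  rw [← Stream'.take_drop, prefixO_append] at hi
  set s := (ζ.drop (K + x.length)).take i
  have hs : s.length = i := Stream'.length_take _ _
  refine ⟨x ++ s ++ c s, hc s, by simp [hx], ?_, ?_⟩
  · simp only [prefixO_append, Stream'.drop_drop, List.length_append, hs, ← add_assoc]
    exact ⟨⟨hK, prefixO_take _ _⟩, hi.1⟩
  · simpa only [Stream'.drop_drop, List.length_append, hs, ← add_assoc] using hi.2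

theorem almost_sure_of_star_infixComplete_general {α : Type*} [Fintype α] [Nonempty α]
    [MeasurableSpace α]
    (μ : Measure (ℕ → α))
    (hμ : ∀ w : List α, μ {ζ | PrefixO w ζ} = ((Fintype.card α : ENNReal))⁻¹ ^ w.length)
    (U V : Set (List α)) (hUne : U.Nonempty)
    (hVreg : RegularLang V) (hVstar : InfixComplete (star V)) :
    ∃ x : List α, μ ({ζ : ℕ → α | PrefixO x ζ} \ catOmega U V) = 0 := by
  obtain ⟨u, hu⟩ := hUne
  obtain ⟨x, hx, B, c, hc⟩ := exists_ne_nil_bounded_completion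
    hVreg.isRegular.kstar.finite_range_leftQuotient
    fun w => (hVstar w).imp fun _ => .imp fun _ => mem_star_iff.1
  have hae : ∀ᵐ ζ ∂μ, ∀ N, ∃ j : ℕ,
      PrefixO (c ((Stream'.take (N + j * (B + x.length)) ζ).drop N) ++ x)
        (Stream'.drop (N + j * (B + x.length)) ζ) :=
    ae_all_iff.2 fun N => ae_exists_prefixO_drop hμ (g := fun z => c (z.drop N) ++ x)
      (fun z => by simpa using (hc _).1) N
  refine ⟨u ++ x, measure_mono_null ?_ (ae_iff.1 hae)⟩
  rintro ζ ⟨hux, hζ⟩ hgood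
  refine hζ ?_
  obtain ⟨huζ, hxζ⟩ := prefixO_append.1 hux
  refine mem_catOmega_of_forall_exists hu huζ (fun K => PrefixO x (Stream'.drop K ζ)) hxζ
    fun K hK => ?_
  obtain ⟨j, hj⟩ := hgood (K + x.length)
  exact exists_mem_prefixO_drop hx (fun s => (hc s).2) hK hj

/-- If `U, V` are regular, `U ≠ ∅` and `V*` is infix complete, then there is a
finite word `x` such that almost every ω-word with prefix `x` lies in `U·V^ω`. -/
theorem almost_sure_of_star_infixComplete {α : Type*} [Fintype α] [Nonempty α]
    [MeasurableSpace α] [DiscreteMeasurableSpace α]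
    (μ : Measure (ℕ → α))
    (hμ : ∀ w : List α, μ {ζ | PrefixO w ζ} = ((Fintype.card α : ENNReal))⁻¹ ^ w.length)
    (U V : Set (List α)) (hUreg : RegularLang U) (hUne : U.Nonempty)
    (hVreg : RegularLang V) (hVstar : InfixComplete (star V)) :
    ∃ x : List α, μ ({ζ : ℕ → α | PrefixO x ζ} \ catOmega U V) = 0 :=
  almost_sure_of_star_infixComplete_general μ hμ U V hUne hVreg hVstar

end Sparse
end
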